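/- (Goussarov's theorem.) Let D be a diagram category and let Ab(D_{≤n}) be the free abelian group on isomorphism classes of objects of D of order at most n. The map s : U_n(D^□) → Ab(D_{≤n}) defined on 0-cells by s(a) = Σ_{S ⊆ F_D(a), |S| ≤ n} a_S (where one isomorphism class may occur several times in the sum) is a well-defined group homomorphism and an isomorphism of abelian groups, with inverse s_− given by s_−(a) = Σ_{S ⊆ F_D(a)} (−1)^{|F_D(a) \ S|} a_S. -/

import Mathlib

open CategoryTheory Opposite

/-- The combinatorial `n`-cube: functions `[n] → {0,1}`. -/
abbrev Cube (n : ℕ) := Fin n → Bool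

/-- A function between combinatorial cubes is a cube map if it admits a pair `(f, s)` where
`f : [m] → [n]` is injective, `s` assigns a fixed bit to every coordinate outside the image
of `f`, every coordinate of the input is copied to its `f`-image coordinate, and every point
of the image agrees with `s` outside the image of `f`. -/
def IsCubeMap {m n : ℕ} (a : Cube m → Cube n) : Prop :=
  ∃ (f : Fin m → Fin n) (s : Fin n → Bool),
    Function.Injective f ∧
    (∀ (b : Cube m) (i : Fin m), b i = a b (f i)) ∧
    (∀ b ∈ Set.range a, ∀ i : Fin n, (∀ j, f j ≠ i) → b i = s i)

theorem isCubeMap_id (m : ℕ) : IsCubeMap (id : Cube m → Cube m) := by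
  refine ⟨id, fun _ => false, fun _ _ h => h, fun _ _ => rfl, ?_⟩
  intro b _ i hi
  exact absurd rfl (hi i)

theorem IsCubeMap.comp {m n k : ℕ} {a : Cube m → Cube n} {b : Cube n → Cube k}
    (ha : IsCubeMap a) (hb : IsCubeMap b) : IsCubeMap (b ∘ a) := by
  classical
  obtain ⟨f₁, s₁, hf₁inj, hf₁, hs₁⟩ := ha
  obtain ⟨f₂, s₂, hf₂inj, hf₂, hs₂⟩ := hb
  refine ⟨f₂ ∘ f₁, fun i => if h : ∃ j, f₂ j = i then s₁ h.choose else s₂ i,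
    hf₂inj.comp hf₁inj, ?_, ?_⟩
  · intro c i
    calc c i = a c (f₁ i) := hf₁ c i
    _ = b (a c) (f₂ (f₁ i)) := hf₂ (a c) (f₁ i)
  · rintro d ⟨c, rfl⟩ i hi
    dsimp only
    by_cases h : ∃ j, f₂ j = i
    · rw [dif_pos h]
      have h1 : a c h.choose = (b ∘ a) c (f₂ h.choose) := hf₂ (a c) h.choose
      rw [h.choose_spec] at h1
      rw [← h1]
      refine hs₁ _ ⟨c, rfl⟩ _ ?_
      intro j hj
      exact hi j (by rw [Function.comp_apply, hj, h.choose_spec])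
    · rw [dif_neg h]
      exact hs₂ _ ⟨a c, rfl⟩ i (fun j hj => h ⟨j, hj⟩)

/-- The hom set of the cube category. -/
def CubeHom (m n : ℕ) := {a : Cube m → Cube n // IsCubeMap a}

/-- Objects of the cube category `Cb` are the combinatorial `n`-cubes. -/
structure CubeCat where
  n : ℕ

/-- The object of `Cb` corresponding to the combinatorial `n`-cube. -/
def cubeObj (n : ℕ) : CubeCat := ⟨n⟩

instance : Category CubeCat where
  Hom A B := CubeHom A.n B.n
  id A := ⟨_root_.id, isCubeMap_id A.n⟩
  comp f g := ⟨g.1 ∘ f.1, f.2.comp g.2⟩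

noncomputable instance (A B : CubeCat) : Fintype (A ⟶ B) := by
  classical
  exact Subtype.fintype _

/-- A cubical complex is a contravariant functor from the cube category to `Set`. -/
abbrev CubicalComplex := CubeCatᵒᵖ ⥤ Type

/-- `|f(∅)|`: the number of `1`s in the image corner of a map from the `0`-cube. -/
def cubeWeight {n : ℕ} (f : cubeObj 0 ⟶ cubeObj (n + 1)) : ℕ :=
  (@Finset.filter _ (fun i : Fin (n + 1) => f.1 (fun j : Fin 0 => j.elim0) i = true)
    (fun i => instDecidableEqBool _ _) Finset.univ).card

/-- The alternating sum over the corners of an `(n+1)`-cell, i.e. the relation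
`∑_{f ∈ Hom(C₀, C_{n+1})} (-1)^{|f(∅)|} · X(fᵒᵖ)(c)`. -/
noncomputable def relationElt (X : CubicalComplex) (n : ℕ)
    (c : X.obj (op (cubeObj (n + 1)))) :
    FreeAbelianGroup (X.obj (op (cubeObj 0))) :=
  ∑ f : cubeObj 0 ⟶ cubeObj (n + 1),
    ((-1 : ℤ) ^ cubeWeight f) • FreeAbelianGroup.of (X.map f.op c)

/-- The subgroup of relations of the rank `n` finite type group. -/
noncomputable def relSubgroup (X : CubicalComplex) (n : ℕ) :
    AddSubgroup (FreeAbelianGroup (X.obj (op (cubeObj 0)))) :=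
  AddSubgroup.closure (Set.range (relationElt X n))

/-- The rank `n` finite type group `Uₙ(X)` of a cubical complex `X`: generated by the
`0`-cells, subject to the alternating-corner-sum relations of the `(n+1)`-cells. -/
noncomputable def UGroup (X : CubicalComplex) (n : ℕ) : Type :=
  FreeAbelianGroup (X.obj (op (cubeObj 0))) ⧸ relSubgroup X n

noncomputable instance (X : CubicalComplex) (n : ℕ) : AddCommGroup (UGroup X n) := by
  unfold UGroup; infer_instance

/-- The generator of `Uₙ(X)` corresponding to a `0`-cell. -/
noncomputable def mkU (X : CubicalComplex) (n : ℕ) (x : X.obj (op (cubeObj 0))) : UGroup X n :=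
  QuotientAddGroup.mk (FreeAbelianGroup.of x)
/-- A diagram category structure on a category `C` equipped with a functor `F` to the category
of finite types: `F` is faithful, takes values in injective maps (so it is a functor to `Inj`),
every subset of `F a` is realized as the image of some arrow into `a` (subdiagrams exist), and
any two arrows into `a` with the same image differ by an isomorphism. -/
structure IsDiagramCat (C : Type) [SmallCategory C] (F : C ⥤ FintypeCat) : Prop where
  faithful : ∀ {a b : C} (f g : a ⟶ b), F.map f = F.map g → f = g
  inj : ∀ {a b : C} (f : a ⟶ b), Function.Injective (F.map f)
  sub : ∀ (a : C) (S : Set (F.obj a)), ∃ (b : C) (f : b ⟶ a), Set.range (F.map f) = S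
  unique_sub : ∀ {a b₁ b₂ : C} (f₁ : b₁ ⟶ a) (f₂ : b₂ ⟶ a),
    Set.range (F.map f₁) = Set.range (F.map f₂) → ∃ g : b₁ ≅ b₂, f₁ = g.hom ≫ f₂

/-- A representative of an `n`-cell of the cubical complex `D^□` of a diagram category:
a pair `(g : p → q, φ)` where `φ` is a bijective labelling of `F q ∖ im (F g)` by `[n]`.
Such a pair is faithfully encoded (up to the isomorphism relation below) by the object `q`
together with the injection `lab = φ⁻¹ : [n] → F q`; the domain `p` of `g` is the subdiagram
of `q` on the complement of the range of `lab`. -/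
structure PreCell (C : Type) [SmallCategory C] (F : C ⥤ FintypeCat) (n : ℕ) where
  q : C
  lab : Fin n → F.obj q
  inj : Function.Injective lab

/-- Isomorphism of pairs: an isomorphism of the underlying objects commuting with the
labellings (the component on the domains `p` exists automatically). -/
def CellRel (C : Type) [SmallCategory C] (F : C ⥤ FintypeCat) (n : ℕ)
    (c₁ c₂ : PreCell C F n) : Prop :=
  ∃ h : c₁.q ≅ c₂.q, ∀ i, F.map h.hom (c₁.lab i) = c₂.lab i

/-- The set of `n`-cells of `D^□`: isomorphism classes of pairs `(g, φ)`. -/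
def DCell (C : Type) [SmallCategory C] (F : C ⥤ FintypeCat) (n : ℕ) :=
  Quot (CellRel C F n)

/-- The `0`-cells of `D^□` are identified with isomorphism classes of objects of `D`. -/
def objCell (C : Type) [SmallCategory C] (F : C ⥤ FintypeCat) (a : C) : DCell C F 0 :=
  Quot.mk _ ⟨a, fun i => i.elim0, fun i => i.elim0⟩

/-- Given an `n`-cell with label injection `lab` and a cube map witness `(f, s)`, the subset of
`F q` kept after deleting the labelled elements whose label lies outside the image of `f`
and has `s`-value `0`; this is `F(q) ∖ φ⁻¹s⁻¹{0}`. -/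
def KeepSet {C : Type} [SmallCategory C] {F : C ⥤ FintypeCat} {m n : ℕ}
    (c : PreCell C F n) (f : Fin m → Fin n) (s : Fin n → Bool) : Set (F.obj c.q) :=
  (c.lab '' {ℓ : Fin n | (∀ j, f j ≠ ℓ) ∧ s ℓ = false})ᶜ

/-- A realization of the cubical complex `D^□` of a diagram category: a cubical complex whose
`n`-cells are the isomorphism classes of pairs `(g, φ)` and whose action along a cube map
`a : C_m → C_n` with associated pair `(f, s)` is given by the formula
`D^□(aᵒᵖ)(g, φ) = (ι_{(im F(g) ∪ φ⁻¹s⁻¹{1}, F(q) ∖ φ⁻¹s⁻¹{0})}, f⁻¹ ∘ φ|_{φ⁻¹(im f)} ∘ F(ι_{F(q) ∖ φ⁻¹s⁻¹{0}}))`: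
in terms of the label injections, the new cell is carried by the subdiagram `q'` of `q` on
`F(q) ∖ φ⁻¹s⁻¹{0}` (with inclusion `ι`), with `F(ι)(lab' i) = lab (f i)` for all `i`. -/
structure BoxComplex (C : Type) [SmallCategory C] (F : C ⥤ FintypeCat) where
  X : CubicalComplex
  cells : ∀ n : ℕ, X.obj (op (cubeObj n)) ≃ DCell C F n
  map_spec : ∀ {m n : ℕ} (a : cubeObj m ⟶ cubeObj n) (f : Fin m → Fin n) (s : Fin n → Bool),
    Function.Injective f →
    (∀ (b : Cube m) (i : Fin m), b i = a.1 b (f i)) →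
    (∀ b ∈ Set.range a.1, ∀ i : Fin n, (∀ j, f j ≠ i) → b i = s i) →
    ∀ (c : PreCell C F n) (c' : PreCell C F m) (ι : c'.q ⟶ c.q),
      Set.range (F.map ι) = KeepSet c f s →
      (∀ i, F.map ι (c'.lab i) = c.lab (f i)) →
      cells m (X.map a.op ((cells n).symm (Quot.mk _ c))) = Quot.mk _ c'
attribute [local instance] FintypeCat.fintype

/-- Isomorphism classes of objects of a category. -/
def ObjClass (C : Type) [SmallCategory C] :=
  Quot (fun a b : C => Nonempty (a ≅ b))

theorem card_eq_of_iso {C : Type} [SmallCategory C] (F : C ⥤ FintypeCat) {a b : C}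
    (h : a ≅ b) : Fintype.card (F.obj a) = Fintype.card (F.obj b) :=
  Fintype.card_congr (FintypeCat.equivEquivIso.symm (F.mapIso h))

/-- The order `|a| = |F(a)|` of an isomorphism class of objects of a diagram category. -/
noncomputable def orderC (C : Type) [SmallCategory C] (F : C ⥤ FintypeCat) :
    ObjClass C → ℕ :=
  Quot.lift (fun a => Fintype.card (F.obj a)) (fun _ _ h => card_eq_of_iso F h.some)

/-- `Ab(D_{≤n})`: the free abelian group on isomorphism classes of objects of order at
most `n`. -/
noncomputable def AbLe (C : Type) [SmallCategory C] (F : C ⥤ FintypeCat) (n : ℕ) :=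
  FreeAbelianGroup {c : ObjClass C // orderC C F c ≤ n}

noncomputable instance (C : Type) [SmallCategory C] (F : C ⥤ FintypeCat) (n : ℕ) :
    AddCommGroup (AbLe C F n) := by
  unfold AbLe; infer_instance

variable {C : Type} [SmallCategory C] {F : C ⥤ FintypeCat}

/-- A chosen subdiagram `a_S` of `a` corresponding to `S ⊆ F(a)`. -/
noncomputable def IsDiagramCat.subObj (hF : IsDiagramCat C F) (a : C) (S : Set (F.obj a)) :
    C :=
  (hF.sub a S).choose

/-- The chosen subdiagram inclusion `ι_S : a_S → a`. -/
noncomputable def IsDiagramCat.subIncl (hF : IsDiagramCat C F) (a : C) (S : Set (F.obj a)) :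
    hF.subObj a S ⟶ a :=
  (hF.sub a S).choose_spec.choose

theorem IsDiagramCat.range_subIncl (hF : IsDiagramCat C F) (a : C) (S : Set (F.obj a)) :
    Set.range (F.map (hF.subIncl a S)) = S :=
  (hF.sub a S).choose_spec.choose_spec

theorem IsDiagramCat.card_subObj (hF : IsDiagramCat C F) (a : C) (S : Finset (F.obj a)) :
    Fintype.card (F.obj (hF.subObj a (S : Set (F.obj a)))) = S.card := by
  classical
  have e1 := Equiv.ofInjective _ (hF.inj (hF.subIncl a (S : Set (F.obj a))))
  have e2 := Equiv.setCongr (hF.range_subIncl a (S : Set (F.obj a)))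
  rw [Fintype.card_congr (e1.trans e2)]
  simp
/-- The isomorphism class of the subdiagram `a_S`, as a generator of `Ab(D_{≤n})`, for
`S ⊆ F(a)` with `|S| ≤ n`. -/
noncomputable def IsDiagramCat.subClsLe (hF : IsDiagramCat C F) (n : ℕ) (a : C)
    (S : Finset (F.obj a)) (h : S.card ≤ n) : {c : ObjClass C // orderC C F c ≤ n} :=
  ⟨Quot.mk _ (hF.subObj a (S : Set (F.obj a))),
    le_of_eq_of_le (hF.card_subObj a S) h⟩

/-- `s` on a generator: `s(a) = ∑_{S ⊆ F(a), |S| ≤ n} a_S ∈ Ab(D_{≤n})`. -/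
noncomputable def sFormula (hF : IsDiagramCat C F) (n : ℕ) (a : C) : AbLe C F n :=
  ∑ S : Finset (F.obj a),
    if h : S.card ≤ n then FreeAbelianGroup.of (hF.subClsLe n a S h) else 0

open scoped Classical in
/-- `s₋` on a generator: `s₋(a) = ∑_{S ⊆ F(a)} (-1)^{|F(a) ∖ S|} · a_S ∈ Uₙ(D^□)`. -/
noncomputable def sInvFormula (hF : IsDiagramCat C F) (B : BoxComplex C F) (n : ℕ) (a : C) :
    UGroup B.X n :=
  ∑ S : Finset (F.obj a),
    ((-1 : ℤ) ^ (Sᶜ.card)) •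
      mkU B.X n ((B.cells 0).symm (objCell C F (hF.subObj a (S : Set (F.obj a)))))

/-! The formula for `s` kills the cube relations. The corners of an `(n+1)`-cell
`(g : p → q, φ)` are the subdiagrams `q_K` with `im F(g) ⊆ K`, and in the alternating sum of
their `s`-values the subdiagram `q_T` occurs with coefficient
`∑_{K ⊇ im F(g) ∪ T} (-1)^{|K ∖ im F(g)|}`, which vanishes unless `T` contains all `n + 1`
labelled elements, i.e. unless `|T| > n`.

On objects of order at most `n`, both `s₋ ∘ s` and `s ∘ s₋` are the identity by Möbius
inversion on the Boolean lattice of subsets. An object `a` of order greater than `n` carries an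
`(n+1)`-cell with `q = a`, whose relation expresses `a` through proper subdiagrams of `a`; so
`s₋ ∘ s` fixes `a` by induction on the order. -/

section BooleanLattice

open Finset

theorem Finset.sum_powerset_image_of_injective {α β M : Type*} [AddCommMonoid M] [DecidableEq β]
    {g : α → β} (hg : Function.Injective g) (s : Finset α) (h : Finset β → M) :
    ∑ T ∈ (s.image g).powerset, h T = ∑ S ∈ s.powerset, h (S.image g) := by
  rw [powerset_image, sum_image fun _ _ _ _ hST => image_injective hg hST]

theorem Finset.sum_sum_powerset_eq_sum_sum_superset {α M : Type*} [Fintype α] [DecidableEq α]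
    [AddCommMonoid M] (𝒮 : Finset (Finset α)) (f : Finset α → Finset α → M) :
    ∑ S ∈ 𝒮, ∑ T ∈ S.powerset, f S T = ∑ T, ∑ S ∈ 𝒮 with T ⊆ S, f S T :=
  sum_comm' (by simp [and_comm])

variable {α M : Type*} [Fintype α] [DecidableEq α] [AddCommGroup M]

theorem Finset.sum_superset_neg_one_pow_card_sdiff {W R : Finset α} (hWR : W ⊆ R) :
    ∑ K with R ⊆ K, (-1 : ℤ) ^ #(K \ W) = if R = univ then (-1) ^ #Wᶜ else 0 := by
  have hsplit : ∀ K, R ⊆ K → #(K \ W) = #(K \ R) + #(R \ W) := fun K hRK => by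
    rw [← card_union_of_disjoint (disjoint_sdiff_self_left.mono_right sdiff_subset)]
    congr 1
    ext x; simp only [mem_union, mem_sdiff]; grind
  rw [sum_nbij' (· \ R) (R ∪ ·) (t := Rᶜ.powerset)
    (g := fun V => (-1 : ℤ) ^ #(R \ W) * (-1) ^ #V)
    (fun K _ => by simp [subset_iff]) (fun V _ => by simp)
    (fun K hK => by simpa using union_sdiff_of_subset (mem_filter.mp hK).2)
    (fun V hV => union_sdiff_cancel_left (disjoint_compl_right.mono_right (mem_powerset.mp hV)))
    (fun K hK => by rw [hsplit K (mem_filter.mp hK).2, pow_add, mul_comm])]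
  rw [← mul_sum, sum_powerset_neg_one_pow_card]
  simp only [compl_eq_empty_iff]
  split_ifs with hR
  · subst hR; rw [mul_one, compl_eq_univ_sdiff]
  · rw [mul_zero]

theorem Finset.sum_superset_neg_one_pow_card_compl (T : Finset α) :
    ∑ S with T ⊆ S, (-1 : ℤ) ^ #Sᶜ = if T = univ then 1 else 0 := by
  rw [sum_nbij' compl compl (t := Tᶜ.powerset) (g := fun V => (-1 : ℤ) ^ #V)
    (fun S hS => by simpa using (mem_filter.mp hS).2)
    (fun V hV => by simpa [subset_compl_comm] using mem_powerset.mp hV)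
    (fun _ _ => compl_compl _) (fun _ _ => compl_compl _) (fun _ _ => rfl),
    sum_powerset_neg_one_pow_card]
  simp only [compl_eq_empty_iff]

theorem Finset.sum_sum_powerset_neg_one_pow_card_sdiff_smul (h : Finset α → M) :
    ∑ S, ∑ T ∈ S.powerset, (-1 : ℤ) ^ #(S \ T) • h T = h univ := by
  simp only [sum_sum_powerset_eq_sum_sum_superset, ← sum_smul,
    sum_superset_neg_one_pow_card_sdiff subset_rfl, ite_smul, zero_smul, sum_ite_eq', mem_univ,
    if_true, compl_univ, card_empty, pow_zero, one_smul]

theorem Finset.sum_neg_one_pow_card_compl_smul_sum_powerset (h : Finset α → M) :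
    ∑ S, (-1 : ℤ) ^ #Sᶜ • ∑ T ∈ S.powerset, h T = h univ := by
  simp only [smul_sum, sum_sum_powerset_eq_sum_sum_superset, ← sum_smul,
    sum_superset_neg_one_pow_card_compl, ite_smul, one_smul, zero_smul, sum_ite_eq', mem_univ,
    if_true]

theorem Finset.sum_superset_neg_one_pow_card_sdiff_smul_sum_powerset (W : Finset α)
    (h : Finset α → M) :
    ∑ K with W ⊆ K, (-1 : ℤ) ^ #(K \ W) • ∑ T ∈ K.powerset, h T =
      (-1 : ℤ) ^ #Wᶜ • ∑ T with Wᶜ ⊆ T, h T := by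
  have hcover : ∀ T : Finset α, W ∪ T = univ ↔ Wᶜ ⊆ T := fun T => by
    simp [eq_univ_iff_forall, subset_iff, or_iff_not_imp_left]
  simp only [smul_sum, sum_sum_powerset_eq_sum_sum_superset, filter_filter, ← union_subset_iff,
    ← sum_smul, sum_superset_neg_one_pow_card_sdiff subset_union_left, hcover, ite_smul,
    zero_smul, ← sum_filter]

theorem Finset.sum_bool_eq_sum_superset {β : Type*} [Fintype β] [DecidableEq β] {lab : β → α}
    (hlab : Function.Injective lab) (g : Finset α → M) :
    ∑ s : β → Bool,
        (-1 : ℤ) ^ #{b | s b = true} • g (({b | s b = false} : Finset β).image lab)ᶜ =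
      ∑ K with (univ.image lab)ᶜ ⊆ K, (-1 : ℤ) ^ #(K \ (univ.image lab)ᶜ) • g K := by
  refine sum_nbij' (fun s => (({b | s b = false} : Finset β).image lab)ᶜ)
    (fun K b => decide (lab b ∈ K)) ?_ (fun _ _ => mem_univ _) ?_ ?_ ?_
  · intro s _
    simp only [mem_filter, mem_univ, true_and, compl_subset_compl]
    exact image_subset_image (subset_univ _)
  · intro s _
    funext b
    simp [hlab.eq_iff]
  · intro K hK
    ext x
    by_cases hx : x ∈ univ.image lab
    · obtain ⟨b, -, rfl⟩ := mem_image.mp hx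
      simp [hlab.eq_iff]
    · have hxK : x ∈ K := (mem_filter.mp hK).2 (mem_compl.mpr hx)
      simp only [mem_image, not_exists, not_and] at hx
      simp [hx, hxK]
  · intro s _
    rw [← card_image_of_injective _ hlab]
    congr 3
    ext x
    simp only [mem_sdiff, mem_compl, mem_image, mem_filter, mem_univ, true_and, not_exists,
      not_and, not_forall, not_not]
    grind

end BooleanLattice

section DiagramCategory

open Finset
open scoped Classical

variable (hF : IsDiagramCat C F)

namespace IsDiagramCat

theorem nonempty_iso_subObj {a b : C} (ι : b ⟶ a) {S : Set (F.obj a)}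
    (h : Set.range (F.map ι) = S) : Nonempty (b ≅ hF.subObj a S) :=
  let ⟨g, _⟩ := hF.unique_sub ι (hF.subIncl a S) (h.trans (hF.range_subIncl a S).symm)
  ⟨g⟩

theorem nonempty_iso_subObj_image {a b : C} (ι : b ⟶ a) (S : Set (F.obj b)) :
    Nonempty (hF.subObj b S ≅ hF.subObj a (F.map ι '' S)) :=
  hF.nonempty_iso_subObj (hF.subIncl b S ≫ ι) <| by
    rw [F.map_comp, ConcreteCategory.coe_comp, Set.range_comp, hF.range_subIncl]

theorem nonempty_iso_subObj_univ (a : C) : Nonempty (hF.subObj a Set.univ ≅ a) :=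
  (hF.nonempty_iso_subObj (𝟙 a) (by rw [F.map_id, ConcreteCategory.coe_id, Set.range_id])).map
    Iso.symm

theorem image_map_subIncl (a : C) (S : Finset (F.obj a)) :
    univ.image (F.map (hF.subIncl a S)) = S :=
  coe_injective (by rw [coe_image, coe_univ, Set.image_univ, hF.range_subIncl])

end IsDiagramCat

theorem image_map_iso_hom {a b : C} (e : a ≅ b) : univ.image (F.map e.hom) = univ :=
  eq_univ_of_forall fun y => mem_image.mpr
    ⟨F.map e.inv y, mem_univ _, by rw [← ConcreteCategory.comp_apply]; simp⟩

abbrev BoxComplex.vertex (B : BoxComplex C F) (a : C) : B.X.obj (op (cubeObj 0)) :=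
  (B.cells 0).symm (objCell C F a)

theorem BoxComplex.vertex_congr (B : BoxComplex C F) {a b : C} (e : a ≅ b) :
    B.vertex a = B.vertex b :=
  congrArg (B.cells 0).symm (Quot.sound ⟨e, fun i => i.elim0⟩)

theorem BoxComplex.exists_vertex_eq (B : BoxComplex C F) (x : B.X.obj (op (cubeObj 0))) :
    ∃ a, B.vertex a = x := by
  obtain ⟨c, hc⟩ := Quot.exists_rep (B.cells 0 x)
  exact ⟨c.q, (B.cells 0).symm_apply_eq.mpr <|
    hc ▸ Quot.sound ⟨Iso.refl _, fun i => i.elim0⟩⟩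

variable (n : ℕ) (B : BoxComplex C F)

noncomputable def sSummand (a : C) (S : Finset (F.obj a)) : AbLe C F n :=
  if h : #S ≤ n then FreeAbelianGroup.of (hF.subClsLe n a S h) else 0

theorem sFormula_eq_sum_sSummand (a : C) : sFormula hF n a = ∑ S, sSummand hF n a S := rfl

theorem subClsLe_image {a b : C} (ι : b ⟶ a) (S : Finset (F.obj b))
    (h : #(S.image (F.map ι)) ≤ n) (h' : #S ≤ n) :
    hF.subClsLe n a (S.image (F.map ι)) h = hF.subClsLe n b S h' :=
  Subtype.ext <| Quot.sound (r := fun a b : C => Nonempty (a ≅ b)) <| by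
    rw [coe_image]
    exact (hF.nonempty_iso_subObj_image ι S).map Iso.symm

theorem sSummand_image {a b : C} (ι : b ⟶ a) (S : Finset (F.obj b)) :
    sSummand hF n a (S.image (F.map ι)) = sSummand hF n b S := by
  have hcard : #(S.image (F.map ι)) = #S := card_image_of_injective S (hF.inj ι)
  exact dite_congr (by rw [hcard]) (fun h => congrArg _ (subClsLe_image hF n ι S _ h))
    fun _ => rfl

theorem sSummand_univ (a : C) (h : Fintype.card (F.obj a) ≤ n) :
    sSummand hF n a univ = FreeAbelianGroup.of ⟨Quot.mk _ a, h⟩ :=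
  (dif_pos (card_univ (α := F.obj a) ▸ h)).trans <| congrArg _ <| Subtype.ext <|
    Quot.sound (r := fun a b : C => Nonempty (a ≅ b)) <| by
      rw [coe_univ]
      exact hF.nonempty_iso_subObj_univ a

theorem sFormula_eq_sum_powerset_image {a b : C} (ι : b ⟶ a) :
    sFormula hF n b = ∑ T ∈ (univ.image (F.map ι)).powerset, sSummand hF n a T := by
  rw [sum_powerset_image_of_injective (hF.inj ι), powerset_univ]
  exact sum_congr rfl fun S _ => (sSummand_image hF n ι S).symm

theorem sInvFormula_eq_sum_powerset_image {a b : C} (ι : b ⟶ a) :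
    sInvFormula hF B n b = ∑ T ∈ (univ.image (F.map ι)).powerset,
      (-1 : ℤ) ^ #(univ.image (F.map ι) \ T) • mkU B.X n (B.vertex (hF.subObj a T)) := by
  rw [sum_powerset_image_of_injective (hF.inj ι), powerset_univ]
  refine sum_congr rfl fun S _ => ?_
  rw [← image_sdiff _ _ (hF.inj ι), card_image_of_injective _ (hF.inj ι),
    ← compl_eq_univ_sdiff, coe_image, ← B.vertex_congr (hF.nonempty_iso_subObj_image ι S).some]

theorem sFormula_subObj (a : C) (S : Finset (F.obj a)) :
    sFormula hF n (hF.subObj a S) = ∑ T ∈ S.powerset, sSummand hF n a T := by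
  rw [sFormula_eq_sum_powerset_image hF n (hF.subIncl a S), hF.image_map_subIncl]

theorem sInvFormula_subObj (a : C) (S : Finset (F.obj a)) :
    sInvFormula hF B n (hF.subObj a S) =
      ∑ T ∈ S.powerset, (-1 : ℤ) ^ #(S \ T) • mkU B.X n (B.vertex (hF.subObj a T)) := by
  rw [sInvFormula_eq_sum_powerset_image hF n B (hF.subIncl a S), hF.image_map_subIncl]

theorem sFormula_congr {a b : C} (e : a ≅ b) : sFormula hF n a = sFormula hF n b := by
  rw [sFormula_eq_sum_powerset_image hF n e.hom, image_map_iso_hom, powerset_univ]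
  rfl

theorem sInvFormula_congr {a b : C} (e : a ≅ b) :
    sInvFormula hF B n a = sInvFormula hF B n b := by
  rw [sInvFormula_eq_sum_powerset_image hF n B e.hom, image_map_iso_hom, powerset_univ]
  simp only [← compl_eq_univ_sdiff]
  rfl

noncomputable def cornerEquiv (m : ℕ) : (cubeObj 0 ⟶ cubeObj m) ≃ Cube m where
  toFun a := a.1 fun j => j.elim0
  invFun s := ⟨fun _ => s, Fin.elim0, s, fun x => x.elim0, fun _ i => i.elim0,
    by rintro _ ⟨_, rfl⟩ _ _; rfl⟩
  left_inv a := Subtype.ext <| funext fun b => by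
    rw [show b = fun j => j.elim0 from funext fun j => j.elim0]
  right_inv _ := rfl

/-- `im F(g)` for the cell `(g, φ)` encoded by `c`. -/
noncomputable def PreCell.domSet {m : ℕ} (c : PreCell C F m) : Finset (F.obj c.q) :=
  (univ.image c.lab)ᶜ

theorem PreCell.card_domSet_compl {m : ℕ} (c : PreCell C F m) : #c.domSetᶜ = m := by
  rw [domSet, compl_compl, card_image_of_injective _ c.inj, card_univ, Fintype.card_fin]

theorem PreCell.keepSet_elim0 {m : ℕ} (c : PreCell C F m) (s : Cube m) :
    KeepSet c Fin.elim0 s = ↑(({i | s i = false} : Finset (Fin m)).image c.lab)ᶜ := by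
  simp [KeepSet]

theorem BoxComplex.map_corner {m : ℕ} (c : PreCell C F m) (s : Cube m) :
    B.X.map ((cornerEquiv m).symm s).op ((B.cells m).symm (Quot.mk _ c)) =
      B.vertex (hF.subObj c.q ↑(({i | s i = false} : Finset (Fin m)).image c.lab)ᶜ) := by
  rw [← c.keepSet_elim0]
  exact (B.cells 0).eq_symm_apply.mpr <| B.map_spec _ Fin.elim0 s (fun x => x.elim0)
    (fun _ i => i.elim0) (by rintro _ ⟨_, rfl⟩ _ _; rfl) c
    ⟨_, fun i => i.elim0, fun i => i.elim0⟩ (hF.subIncl _ _) (hF.range_subIncl _ _)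
    fun i => i.elim0

theorem relationElt_eq_sum_superset (c : PreCell C F (n + 1)) :
    relationElt B.X n ((B.cells (n + 1)).symm (Quot.mk _ c)) =
      ∑ K with c.domSet ⊆ K,
        (-1 : ℤ) ^ #(K \ c.domSet) • FreeAbelianGroup.of (B.vertex (hF.subObj c.q K)) := by
  rw [relationElt, ← (cornerEquiv (n + 1)).symm.sum_comp]
  simp only [B.map_corner hF c]
  exact sum_bool_eq_sum_superset c.inj fun K => FreeAbelianGroup.of (B.vertex (hF.subObj c.q K))

theorem mkU_cube_relation (c : PreCell C F (n + 1)) :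
    ∑ K with c.domSet ⊆ K,
      (-1 : ℤ) ^ #(K \ c.domSet) • mkU B.X n (B.vertex (hF.subObj c.q K)) = 0 := by
  have h := (QuotientAddGroup.eq_zero_iff _).mpr
    (AddSubgroup.subset_closure ⟨_, rfl⟩ :
      relationElt B.X n ((B.cells (n + 1)).symm (Quot.mk _ c)) ∈ relSubgroup B.X n)
  rw [relationElt_eq_sum_superset hF, QuotientAddGroup.mk_sum] at h
  simp only [QuotientAddGroup.mk_zsmul] at h
  exact h

noncomputable def sVertex (x : B.X.obj (op (cubeObj 0))) : AbLe C F n :=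
  Quot.liftOn (B.cells 0 x) (fun c => sFormula hF n c.q) fun _ _ ⟨e, _⟩ => sFormula_congr hF n e

theorem sVertex_vertex (a : C) : sVertex hF n B (B.vertex a) = sFormula hF n a := by
  rw [sVertex, BoxComplex.vertex, Equiv.apply_symm_apply]
  rfl

theorem relSubgroup_le_ker_lift_sVertex :
    relSubgroup B.X n ≤ (FreeAbelianGroup.lift (sVertex hF n B)).ker := by
  rw [relSubgroup, AddSubgroup.closure_le]
  rintro - ⟨x, rfl⟩
  obtain ⟨c, hc⟩ := Quot.exists_rep (B.cells (n + 1) x)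
  rw [← (B.cells (n + 1)).symm_apply_apply x, ← hc, SetLike.mem_coe, AddMonoidHom.mem_ker,
    relationElt_eq_sum_superset hF, map_sum]
  simp only [map_zsmul, FreeAbelianGroup.lift_apply_of, sVertex_vertex, sFormula_subObj,
    sum_superset_neg_one_pow_card_sdiff_smul_sum_powerset]
  refine smul_eq_zero_of_right _ (sum_eq_zero fun T hT => dif_neg ?_)
  have := card_le_card (mem_filter.mp hT).2
  rw [c.card_domSet_compl] at this
  omega

noncomputable def sHom : UGroup B.X n →+ AbLe C F n :=
  QuotientAddGroup.lift _ _ (relSubgroup_le_ker_lift_sVertex hF n B)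

theorem sHom_mkU_vertex (a : C) : sHom hF n B (mkU B.X n (B.vertex a)) = sFormula hF n a :=
  (FreeAbelianGroup.lift_apply_of _ _).trans (sVertex_vertex hF n B a)

noncomputable def sInvHom : AbLe C F n →+ UGroup B.X n :=
  FreeAbelianGroup.lift fun p =>
    Quot.liftOn p.1 (sInvFormula hF B n) fun _ _ h => sInvFormula_congr hF n B h.some

theorem sInvHom_of (a : C) (h : Fintype.card (F.obj a) ≤ n) :
    sInvHom hF n B (FreeAbelianGroup.of ⟨Quot.mk _ a, h⟩) = sInvFormula hF B n a :=
  FreeAbelianGroup.lift_apply_of _ _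

theorem sHom_sInvFormula (a : C) (h : Fintype.card (F.obj a) ≤ n) :
    sHom hF n B (sInvFormula hF B n a) = FreeAbelianGroup.of ⟨Quot.mk _ a, h⟩ := by
  rw [sInvFormula, map_sum]
  simp only [map_zsmul, sHom_mkU_vertex, sFormula_subObj,
    sum_neg_one_pow_card_compl_smul_sum_powerset, sSummand_univ hF n a h]
  rfl

theorem sInvHom_sFormula (a : C) (h : Fintype.card (F.obj a) ≤ n) :
    sInvHom hF n B (sFormula hF n a) = mkU B.X n (B.vertex a) := by
  have hsummand : ∀ S, sInvHom hF n B (sSummand hF n a S) = sInvFormula hF B n (hF.subObj a S) :=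
    fun S => (congrArg (sInvHom hF n B)
      (dif_pos ((card_le_univ S).trans h) : sSummand hF n a S = _)).trans
      (FreeAbelianGroup.lift_apply_of _ _)
  rw [sFormula_eq_sum_sSummand, map_sum]
  simp only [hsummand, sInvFormula_subObj, sum_sum_powerset_neg_one_pow_card_sdiff_smul, coe_univ]
  exact congrArg _ (B.vertex_congr (hF.nonempty_iso_subObj_univ a).some)

theorem sInvHom_sHom_mkU_vertex (a : C) :
    sInvHom hF n B (sHom hF n B (mkU B.X n (B.vertex a))) = mkU B.X n (B.vertex a) := by
  induction hk : Fintype.card (F.obj a) using Nat.strong_induction_on generalizing a with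
  | _ k ih =>
  by_cases hkn : k ≤ n
  · rw [sHom_mkU_vertex, sInvHom_sFormula hF n B a (hk ▸ hkn)]
  obtain ⟨lab⟩ : Nonempty (Fin (n + 1) ↪ F.obj a) :=
    Function.Embedding.nonempty_of_card_le (by rw [Fintype.card_fin]; omega)
  let c : PreCell C F (n + 1) := ⟨a, lab, lab.injective⟩
  let D := (sInvHom hF n B).comp (sHom hF n B) - AddMonoidHom.id _
  have hsmaller : ∀ K : Finset (F.obj a), K ≠ univ →
      D (mkU B.X n (B.vertex (hF.subObj a K))) = 0 :=
    fun K hK => sub_eq_zero.mpr <| ih _ (hk ▸ (hF.card_subObj a K).trans_lt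
      (card_lt_iff_ne_univ K |>.mpr hK)) _ rfl
  have hrel := congrArg D (mkU_cube_relation hF n B c)
  rw [map_sum, map_zero, sum_eq_single_of_mem univ (by simp)
      fun K _ hK => by rw [map_zsmul, hsmaller K hK, smul_zero],
    map_zsmul, (isUnit_neg_one.pow _).smul_eq_zero, coe_univ] at hrel
  exact sub_eq_zero.mp <| (congrArg (fun x => D (mkU B.X n x))
    (B.vertex_congr (hF.nonempty_iso_subObj_univ a).some)).symm.trans hrel

end DiagramCategory

/-- **Goussarov's theorem.** For a diagram category `D = (C, F)` and a
realization `B` of `D^□`, the map `s : Uₙ(D^□) → Ab(D_{≤n})` given on generators (0-cells,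
i.e. isomorphism classes of objects) by `s(a) = ∑_{S ⊆ F(a), |S| ≤ n} a_S` is a well-defined
group homomorphism and an isomorphism of abelian groups, whose inverse is given on generators
by `s₋(a) = ∑_{S ⊆ F(a)} (-1)^{|F(a) ∖ S|} a_S`. -/
theorem goussarov (C : Type) [SmallCategory C] (F : C ⥤ FintypeCat)
    (hF : IsDiagramCat C F) (B : BoxComplex C F) (n : ℕ) :
    ∃ s : UGroup B.X n ≃+ AbLe C F n,
      (∀ a : C, s (mkU B.X n ((B.cells 0).symm (objCell C F a))) = sFormula hF n a) ∧
      (∀ (a : C) (h : Fintype.card (F.obj a) ≤ n),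
        s.symm (FreeAbelianGroup.of ⟨Quot.mk _ a, h⟩) = sInvFormula hF B n a) := by
  have hleft : (sInvHom hF n B).comp (sHom hF n B) = AddMonoidHom.id _ := by
    refine QuotientAddGroup.addMonoidHom_ext _ (FreeAbelianGroup.lift_ext _ _ fun x => ?_)
    obtain ⟨a, rfl⟩ := B.exists_vertex_eq x
    exact sInvHom_sHom_mkU_vertex hF n B a
  have hright : (sHom hF n B).comp (sInvHom hF n B) = AddMonoidHom.id _ := by
    refine FreeAbelianGroup.lift_ext _ _ fun ⟨c, hc⟩ => ?_
    induction c using Quot.ind with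
    | mk a => exact (congrArg _ (sInvHom_of hF n B a hc)).trans (sHom_sInvFormula hF n B a hc)
  exact ⟨AddMonoidHom.toAddEquiv _ _ hleft hright, sHom_mkU_vertex hF n B, sInvHom_of hF n B⟩
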